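/- Let x ∈ [1,∞)⁶ and i ∈ {2,3,5,6}. If ∂φ/∂xᵢ(x) ≥ 0 and ∂φ/∂x_{î}(x) ≥ 0, then for all t, s ≥ 0 one has φ(x) ≤ φ(x + t·mᵢ + s·m_{î}). -/

import Mathlib

open Real

/-- The cosine of the dihedral angle at the edge `e₁` of a generalized hyper-ideal
tetrahedron whose edge lengths `lᵢ` satisfy `cosh lᵢ = xᵢ`. -/
noncomputable def phi (x1 x2 x3 x4 x5 x6 : ℝ) : ℝ :=
  (x2 * x3 + x5 * x6 + x1 * x2 * x5 + x1 * x3 * x6 - x1 ^ 2 * x4 + x4) /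
    (Real.sqrt (2 * x1 * x2 * x6 + x1 ^ 2 + x2 ^ 2 + x6 ^ 2 - 1) *
      Real.sqrt (2 * x1 * x3 * x5 + x1 ^ 2 + x3 ^ 2 + x5 ^ 2 - 1))

/-- `phi` as a function of a vector `x : Fin 6 → ℝ`, where `x ⟨k-1⟩` plays the
role of the coordinate `x_k`, `k = 1, …, 6`. -/
noncomputable def phiV (x : Fin 6 → ℝ) : ℝ :=
  phi (x 0) (x 1) (x 2) (x 3) (x 4) (x 5)

/-- The partial derivative `∂φ/∂x_{i+1}` of `phiV` in the `i`-th coordinate at `x`. -/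
noncomputable def pphi (i : Fin 6) (x : Fin 6 → ℝ) : ℝ :=
  deriv (fun u => phiV (Function.update x i u)) (x i)

/-- The pairing `2̂ = 5, 3̂ = 6, 5̂ = 2, 6̂ = 3` of the indices `{2,3,5,6}`; in the
`0`-based indexing of `Fin 6` the pairs are `(1,4), (2,5), (4,1), (5,2)`. -/
def IsPairedIndex (i ih : Fin 6) : Prop :=
  (i = 1 ∧ ih = 4) ∨ (i = 2 ∧ ih = 5) ∨ (i = 4 ∧ ih = 1) ∨ (i = 5 ∧ ih = 2)

/-!
The partial derivative `∂φ/∂x₂` is a positive multiple of the polynomial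
`F = (x₃ + x₁x₅) P − N (x₁x₆ + x₂)`, where `N` is the numerator of `φ` and `P` its first
radicand. Raising `x₂` by `t` and `x₅` by `s` changes `F` by
`(x₁² − 1) (t (x₄ + x₅x₆) + s ((x₂ + t) x₆ + x₁)) ≥ 0`, so once `∂φ/∂x₂ ≥ 0` it stays
nonnegative while `x₂` and `x₅` grow. Hence `φ` is nondecreasing as `x₂` grows, and then, by the
symmetry `φ(x₁,x₂,x₃,x₄,x₅,x₆) = φ(x₁,x₅,x₆,x₄,x₂,x₃)`, as `x₅` grows. The pair `(3,6)` follows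
from `(2,5)` by the symmetry exchanging `(x₂,x₅)` with `(x₃,x₆)`.
-/

open Set

def phiNumerator (a b c d e f : ℝ) : ℝ :=
  b * c + e * f + a * b * e + a * c * f - a ^ 2 * d + d

def phiRadicand (a b f : ℝ) : ℝ :=
  2 * a * b * f + a ^ 2 + b ^ 2 + f ^ 2 - 1

def phiDerivNumerator (a b c d e f : ℝ) : ℝ :=
  (c + a * e) * phiRadicand a b f - phiNumerator a b c d e f * (a * f + b)

variable {a b c d e f : ℝ}

theorem phi_eq_div (a b c d e f : ℝ) :
    phi a b c d e f =
      phiNumerator a b c d e f / (√(phiRadicand a b f) * √(phiRadicand a c e)) :=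
  rfl

theorem phi_swap_two_five (a b c d e f : ℝ) : phi a b c d e f = phi a e f d b c := by
  simp only [phi_eq_div, phiNumerator, phiRadicand]
  rw [mul_comm (√_)]
  ring_nf

theorem phi_swap_two_three (a b c d e f : ℝ) : phi a b c d e f = phi a c b d f e := by
  simp only [phi_eq_div, phiNumerator, phiRadicand]
  rw [mul_comm (√_)]
  ring_nf

theorem phiRadicand_pos (ha : 1 ≤ a) (hb : 1 ≤ b) (hf : 1 ≤ f) : 0 < phiRadicand a b f := by
  have hab : 1 ≤ a * b := one_le_mul_of_one_le_of_one_le ha hb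
  unfold phiRadicand
  nlinarith [mul_le_mul hab hf zero_le_one (by positivity)]

theorem hasDerivAt_phi_two (ha : 1 ≤ a) (hb : 1 ≤ b) (hc : 1 ≤ c) (he : 1 ≤ e) (hf : 1 ≤ f) :
    HasDerivAt (fun u => phi a u c d e f)
      (phiDerivNumerator a b c d e f / (√(phiRadicand a b f) ^ 3 * √(phiRadicand a c e))) b := by
  have hP := phiRadicand_pos ha hb hf
  have hsP := Real.sqrt_pos.2 hP
  have hsQ := Real.sqrt_pos.2 (phiRadicand_pos ha hc he)
  have hN : HasDerivAt (fun u => phiNumerator a u c d e f) (c + a * e) b :=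
    (((hasDerivAt_id' b).mul_const (c + a * e)).add_const (e * f + a * c * f - a ^ 2 * d + d)
      |>.congr_deriv (one_mul _)).congr_of_eventuallyEq
      (.of_forall fun u => by simp only [phiNumerator]; ring)
  have hR : HasDerivAt (fun u => phiRadicand a u f) (2 * a * f + 2 * b) b :=
    ((((hasDerivAt_id' b).mul_const (2 * a * f)).add (hasDerivAt_pow 2 b)).add_const
      (a ^ 2 + f ^ 2 - 1) |>.congr_deriv (by ring)).congr_of_eventuallyEq
      (.of_forall fun u => by simp only [phiRadicand, Pi.add_apply]; ring)
  refine (hN.div ((hR.sqrt hP.ne').mul_const √(phiRadicand a c e)) (by positivity)).congr_deriv ?_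
  simp only [phiDerivNumerator]
  field_simp
  rw [sq_sqrt hP.le]

theorem deriv_phi_two_nonneg_iff (ha : 1 ≤ a) (hb : 1 ≤ b) (hc : 1 ≤ c) (he : 1 ≤ e)
    (hf : 1 ≤ f) :
    0 ≤ deriv (fun u => phi a u c d e f) b ↔ 0 ≤ phiDerivNumerator a b c d e f := by
  have hD : 0 < √(phiRadicand a b f) ^ 3 * √(phiRadicand a c e) := by
    have := phiRadicand_pos ha hb hf
    have := phiRadicand_pos ha hc he
    positivity
  rw [(hasDerivAt_phi_two ha hb hc he hf).deriv, le_div_iff₀ hD, zero_mul]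

theorem phiDerivNumerator_mono {b' e' : ℝ} (ha : 1 ≤ a) (hb : 1 ≤ b) (hd : 1 ≤ d) (he : 1 ≤ e)
    (hf : 1 ≤ f) (hbb' : b ≤ b') (hee' : e ≤ e') :
    phiDerivNumerator a b c d e f ≤ phiDerivNumerator a b' c d e' f := by
  have hdiff : phiDerivNumerator a b' c d e' f - phiDerivNumerator a b c d e f
      = (a ^ 2 - 1) * ((b' - b) * (d + e * f) + (e' - e) * (b' * f + a)) := by
    simp only [phiDerivNumerator, phiNumerator, phiRadicand]; ring
  rw [← sub_nonneg, hdiff]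
  have ha2 : 0 ≤ a ^ 2 - 1 := by nlinarith
  have hdef : 0 ≤ d + e * f := by nlinarith
  have hbfa : 0 ≤ b' * f + a := by nlinarith
  exact mul_nonneg ha2 <| add_nonneg (mul_nonneg (sub_nonneg.2 hbb') hdef)
    (mul_nonneg (sub_nonneg.2 hee') hbfa)

theorem monotoneOn_phi_two (ha : 1 ≤ a) (hb : 1 ≤ b) (hc : 1 ≤ c) (hd : 1 ≤ d) (he : 1 ≤ e)
    (hf : 1 ≤ f) (hF : 0 ≤ phiDerivNumerator a b c d e f) :
    MonotoneOn (fun u => phi a u c d e f) (Ici b) := by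
  have hderiv (u : ℝ) (hu : b ≤ u) := hasDerivAt_phi_two (d := d) ha (hb.trans hu) hc he hf
  apply monotoneOn_of_deriv_nonneg (convex_Ici b)
  · exact fun u hu => (hderiv u hu).continuousAt.continuousWithinAt
  · rw [interior_Ici]
    exact fun u hu => (hderiv u hu.le).differentiableAt.differentiableWithinAt
  · rw [interior_Ici]
    intro u hu
    rw [deriv_phi_two_nonneg_iff ha (hb.trans hu.le) hc he hf]
    exact hF.trans (phiDerivNumerator_mono ha hb hd he hf hu.le le_rfl)

theorem phi_le_phi_add_two_five {t s : ℝ} (ha : 1 ≤ a) (hb : 1 ≤ b) (hc : 1 ≤ c) (hd : 1 ≤ d)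
    (he : 1 ≤ e) (hf : 1 ≤ f) (ht : 0 ≤ t) (hs : 0 ≤ s)
    (h2 : 0 ≤ phiDerivNumerator a b c d e f) (h5 : 0 ≤ phiDerivNumerator a e f d b c) :
    phi a b c d e f ≤ phi a (b + t) c d (e + s) f := by
  have hbt : b ≤ b + t := le_add_of_nonneg_right ht
  have hes : e ≤ e + s := le_add_of_nonneg_right hs
  have h5' : 0 ≤ phiDerivNumerator a e f d (b + t) c :=
    h5.trans (phiDerivNumerator_mono ha he hd hb hc le_rfl hbt)
  calc phi a b c d e f ≤ phi a (b + t) c d e f :=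
        monotoneOn_phi_two ha hb hc hd he hf h2 self_mem_Ici hbt hbt
    _ = phi a e f d (b + t) c := phi_swap_two_five ..
    _ ≤ phi a (e + s) f d (b + t) c :=
        monotoneOn_phi_two ha he hf hd (hb.trans hbt) hc h5' self_mem_Ici hes hes
    _ = phi a (b + t) c d (e + s) f := (phi_swap_two_five ..).symm

theorem pphi_one (x : Fin 6 → ℝ) :
    pphi 1 x = deriv (fun u => phi (x 0) u (x 2) (x 3) (x 4) (x 5)) (x 1) := by
  simp [pphi, phiV]

theorem pphi_four (x : Fin 6 → ℝ) :
    pphi 4 x = deriv (fun u => phi (x 0) u (x 5) (x 3) (x 1) (x 2)) (x 4) := by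
  simp [pphi, phiV, phi_swap_two_five (x 0) (x 1)]

theorem pphi_two (x : Fin 6 → ℝ) :
    pphi 2 x = deriv (fun u => phi (x 0) u (x 1) (x 3) (x 5) (x 4)) (x 2) := by
  simp [pphi, phiV, phi_swap_two_three (x 0) (x 1)]

theorem pphi_five (x : Fin 6 → ℝ) :
    pphi 5 x = deriv (fun u => phi (x 0) u (x 4) (x 3) (x 2) (x 1)) (x 5) := by
  simp [pphi, phiV, phi_swap_two_five (x 0) (x 1), phi_swap_two_three (x 0) (x 4)]

theorem phiV_le_add_single_one_four {x : Fin 6 → ℝ} {t s : ℝ} (hx : ∀ j, 1 ≤ x j)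
    (h1 : 0 ≤ pphi 1 x) (h4 : 0 ≤ pphi 4 x) (ht : 0 ≤ t) (hs : 0 ≤ s) :
    phiV x ≤ phiV (x + t • (Pi.single 1 1 : Fin 6 → ℝ) + s • (Pi.single 4 1 : Fin 6 → ℝ)) := by
  rw [pphi_one, deriv_phi_two_nonneg_iff (hx 0) (hx 1) (hx 2) (hx 4) (hx 5)] at h1
  rw [pphi_four, deriv_phi_two_nonneg_iff (hx 0) (hx 4) (hx 5) (hx 1) (hx 2)] at h4
  simpa [phiV] using
    phi_le_phi_add_two_five (hx 0) (hx 1) (hx 2) (hx 3) (hx 4) (hx 5) ht hs h1 h4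

theorem phiV_le_add_single_two_five {x : Fin 6 → ℝ} {t s : ℝ} (hx : ∀ j, 1 ≤ x j)
    (h2 : 0 ≤ pphi 2 x) (h5 : 0 ≤ pphi 5 x) (ht : 0 ≤ t) (hs : 0 ≤ s) :
    phiV x ≤ phiV (x + t • (Pi.single 2 1 : Fin 6 → ℝ) + s • (Pi.single 5 1 : Fin 6 → ℝ)) := by
  rw [pphi_two, deriv_phi_two_nonneg_iff (hx 0) (hx 2) (hx 1) (hx 5) (hx 4)] at h2
  rw [pphi_five, deriv_phi_two_nonneg_iff (hx 0) (hx 5) (hx 4) (hx 2) (hx 1)] at h5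
  simpa [phiV, phi_swap_two_three (x 0) (x 1)] using
    phi_le_phi_add_two_five (hx 0) (hx 2) (hx 1) (hx 3) (hx 5) (hx 4) ht hs h2 h5

theorem phi_monotone_pair (x : Fin 6 → ℝ) (hx : ∀ j, 1 ≤ x j)
    (i ih : Fin 6) (hpair : IsPairedIndex i ih)
    (hd : 0 ≤ pphi i x) (hd' : 0 ≤ pphi ih x) :
    ∀ t s : ℝ, 0 ≤ t → 0 ≤ s →
      phiV x ≤ phiV (x + t • (Pi.single i 1 : Fin 6 → ℝ) + s • (Pi.single ih 1 : Fin 6 → ℝ)) := by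
  intro t s ht hs
  rcases hpair with ⟨rfl, rfl⟩ | ⟨rfl, rfl⟩ | ⟨rfl, rfl⟩ | ⟨rfl, rfl⟩
  · exact phiV_le_add_single_one_four hx hd hd' ht hs
  · exact phiV_le_add_single_two_five hx hd hd' ht hs
  · rw [add_right_comm]
    exact phiV_le_add_single_one_four hx hd' hd hs ht
  · rw [add_right_comm]
    exact phiV_le_add_single_two_five hx hd' hd hs ht
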